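/- arXiv:1805.01665 — 8 statements merged into one kernel-verified Lean document; each statement's English description precedes it below -/
import Mathlib

section
/- Let ρ: ℝ → ℝ be smooth and everywhere positive, and define the first-order operator D := ρ⁻¹ · d/dx (the 'y-derivative') and Q := -¼ρ⁻² + ¾ρ⁻⁴(ρ')² - ½ρ⁻³ρ''. Then for every smooth f: ℝ → ℝ, ρ^{-3/2}·(¼·(ρ^{-1/2}f) - (ρ^{-1/2}f)'') = -(Q·f + D(D f)). -/
theorem stmt0 (ρ f : ℝ → ℝ) (hρ : ContDiff ℝ (⊤ : ℕ∞) ρ) (hf : ContDiff ℝ (⊤ : ℕ∞) f)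
    (hpos : ∀ x, 0 < ρ x)
    (D : (ℝ → ℝ) → (ℝ → ℝ)) (hD : ∀ g x, D g x = (ρ x)⁻¹ * deriv g x)
    (Q : ℝ → ℝ)
    (hQ : ∀ x, Q x = -(1/4) * (ρ x) ^ (-2 : ℤ)
      + (3/4) * (ρ x) ^ (-4 : ℤ) * (deriv ρ x) ^ 2
      - (1/2) * (ρ x) ^ (-3 : ℤ) * deriv (deriv ρ) x) :
    ∀ x, (ρ x) ^ (-(3:ℝ)/2) *
        ((1/4) * ((ρ x) ^ (-(1:ℝ)/2) * f x)
          - deriv (deriv (fun t => (ρ t) ^ (-(1:ℝ)/2) * f t)) x)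
      = -(Q x * f x + D (D f) x) := by
  intro x
  set p : ℝ := -(1:ℝ)/2 with hp
  have hρd : Differentiable ℝ ρ := hρ.differentiable (by simp)
  have hfd : Differentiable ℝ f := hf.differentiable (by simp)
  have hρ'd : Differentiable ℝ (deriv ρ) :=
    (contDiff_infty_iff_deriv.mp (contDiff_infty_iff_deriv.mp (hρ.of_le (by simp))).2).1
  have hf'd : Differentiable ℝ (deriv f) :=
    (contDiff_infty_iff_deriv.mp (contDiff_infty_iff_deriv.mp (hf.of_le (by simp))).2).1
  -- u = ρ^p
  have hu : ∀ z, HasDerivAt (fun t => ρ t ^ p) (p * ρ z ^ (p - 1) * deriv ρ z) z := by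
    intro z
    have := (hρd z).hasDerivAt.rpow_const (p := p) (Or.inl (hpos z).ne')
    simpa [mul_comm, mul_assoc, mul_left_comm] using this
  have hu_deriv : deriv (fun t => ρ t ^ p) = fun z => p * ρ z ^ (p - 1) * deriv ρ z :=
    funext fun z => (hu z).deriv
  -- second derivative of u at x
  have hu2 : HasDerivAt (deriv (fun t => ρ t ^ p))
      (p * ((p - 1) * ρ x ^ (p - 1 - 1) * deriv ρ x) * deriv ρ x
        + p * ρ x ^ (p - 1) * deriv (deriv ρ) x) x := by
    rw [hu_deriv]
    have h1 : HasDerivAt (fun z => p * ρ z ^ (p - 1))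
        (p * ((p - 1) * ρ x ^ (p - 1 - 1) * deriv ρ x)) x := by
      have := (hρd x).hasDerivAt.rpow_const (p := p - 1) (Or.inl (hpos x).ne')
      simpa [mul_assoc, mul_comm, mul_left_comm] using this.const_mul p
    simpa [mul_assoc, Pi.mul_def] using h1.mul (hρ'd x).hasDerivAt
  -- first derivative of u*f as a function
  have hprod_deriv : deriv (fun t => ρ t ^ p * f t)
      = fun z => p * ρ z ^ (p - 1) * deriv ρ z * f z + ρ z ^ p * deriv f z :=
    funext fun z => ((hu z).mul (hfd z).hasDerivAt).deriv
  -- second derivative of u*f at x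
  have hprod2 : HasDerivAt (deriv (fun t => ρ t ^ p * f t))
      ((p * ((p - 1) * ρ x ^ (p - 1 - 1) * deriv ρ x) * deriv ρ x
          + p * ρ x ^ (p - 1) * deriv (deriv ρ) x) * f x
        + p * ρ x ^ (p - 1) * deriv ρ x * deriv f x
        + (p * ρ x ^ (p - 1) * deriv ρ x * deriv f x
          + ρ x ^ p * deriv (deriv f) x)) x := by
    rw [hprod_deriv]
    have h1 : HasDerivAt (fun z => p * ρ z ^ (p - 1) * deriv ρ z * f z)
        ((p * ((p - 1) * ρ x ^ (p - 1 - 1) * deriv ρ x) * deriv ρ x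
          + p * ρ x ^ (p - 1) * deriv (deriv ρ) x) * f x
        + p * ρ x ^ (p - 1) * deriv ρ x * deriv f x) x := by
      have := (hu2.mul (hfd x).hasDerivAt)
      rw [hu_deriv] at this
      simpa [Pi.mul_def] using this
    have h2 : HasDerivAt (fun z => ρ z ^ p * deriv f z)
        (p * ρ x ^ (p - 1) * deriv ρ x * deriv f x
          + ρ x ^ p * deriv (deriv f) x) x := (hu x).mul (hf'd x).hasDerivAt
    exact h1.add h2
  -- D (D f) x
  have hDf : D f = fun z => (ρ z)⁻¹ * deriv f z := funext fun z => hD f z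
  have hDfderiv : HasDerivAt (fun z => (ρ z)⁻¹ * deriv f z)
      (-deriv ρ x / ρ x ^ 2 * deriv f x + (ρ x)⁻¹ * deriv (deriv f) x) x :=
    ((hρd x).hasDerivAt.inv (hpos x).ne').mul (hf'd x).hasDerivAt
  have hDDf : D (D f) x = (ρ x)⁻¹ *
      (-deriv ρ x / ρ x ^ 2 * deriv f x + (ρ x)⁻¹ * deriv (deriv f) x) := by
    rw [hD, hDf, hDfderiv.deriv]
  -- rewrite the goal
  have h32 : (-(3:ℝ)/2 : ℝ) = p - 1 := by rw [hp]; norm_num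
  rw [h32, hprod2.deriv, hDDf, hQ x]
  -- algebra: express all powers of r = ρ x through a = r ^ p
  set r := ρ x with hr
  have hr0 : (0:ℝ) < r := hpos x
  set a := r ^ p with ha
  set b := r ^ (p - 1) with hb
  set c := r ^ (p - 1 - 1) with hc
  have hak : ∀ k : ℕ, a ^ k = r ^ (p * k) := fun k => by
    rw [ha, ← Real.rpow_natCast (r ^ p) k, ← Real.rpow_mul hr0.le]
  have hb3 : b = a ^ 3 := by
    rw [hak 3, hb]; congr 1; rw [hp]; push_cast; ring
  have hc5 : c = a ^ 5 := by
    rw [hak 5, hc]; congr 1; rw [hp]; push_cast; ring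
  have hrpow : ∀ k : ℕ, (r ^ k)⁻¹ = r ^ (-(k:ℝ)) := fun k => by
    rw [Real.rpow_neg hr0.le, Real.rpow_natCast]
  have hi1 : r⁻¹ = a ^ 2 := by
    rw [hak 2, show r⁻¹ = (r ^ 1)⁻¹ by norm_num, hrpow 1]
    congr 1; rw [hp]; push_cast; ring
  have hi2 : (r ^ 2)⁻¹ = a ^ 4 := by
    rw [hrpow 2, hak 4]; congr 1; rw [hp]; push_cast; ring
  have hzk : ∀ k : ℕ, r ^ (-(k:ℤ)) = a ^ (2 * k) := fun k => by
    rw [zpow_neg, zpow_natCast, hrpow k, hak (2 * k)]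
    congr 1; rw [hp]; push_cast; ring
  have hz2 : r ^ (-2:ℤ) = a ^ 4 := by simpa using hzk 2
  have hz3 : r ^ (-3:ℤ) = a ^ 6 := by simpa using hzk 3
  have hz4 : r ^ (-4:ℤ) = a ^ 8 := by simpa using hzk 4
  have hdiv : -deriv ρ x / r ^ 2 = -deriv ρ x * a ^ 4 := by
    rw [div_eq_mul_inv, hi2]
  rw [hz2, hz3, hz4, hdiv, hi1, hb3, hc5, hp]
  ring
end

section
/- Let ρ: ℝ → ℝ be smooth and everywhere positive, D := ρ⁻¹·d/dx, and Q := -¼ρ⁻² + ¾ρ⁻⁴(ρ')² - ½ρ⁻³ρ''. Then for every smooth f: ℝ → ℝ, ρ⁻²·((ρ⁻¹f)' - (ρ⁻¹f)''') = -( D³f + 2Q·Df + 2·D(Q·f) ), where D³ denotes D applied three times. -/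
set_option maxHeartbeats 2000000

theorem stmt1 (ρ f : ℝ → ℝ) (hρ : ContDiff ℝ (⊤ : ℕ∞) ρ) (hf : ContDiff ℝ (⊤ : ℕ∞) f)
    (hpos : ∀ x, 0 < ρ x)
    (D : (ℝ → ℝ) → (ℝ → ℝ)) (hD : ∀ g x, D g x = (ρ x)⁻¹ * deriv g x)
    (Q : ℝ → ℝ)
    (hQ : ∀ x, Q x = -(1/4) * (ρ x) ^ (-2 : ℤ)
      + (3/4) * (ρ x) ^ (-4 : ℤ) * (deriv ρ x) ^ 2
      - (1/2) * (ρ x) ^ (-3 : ℤ) * deriv (deriv ρ) x) :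
    ∀ x, (ρ x) ^ (-2 : ℤ) *
        (deriv (fun t => (ρ t)⁻¹ * f t) x
          - deriv (deriv (deriv (fun t => (ρ t)⁻¹ * f t))) x)
      = -(D (D (D f)) x + 2 * Q x * D f x + 2 * D (fun t => Q t * f t) x) := by
  have ane : ∀ x, ρ x ≠ 0 := fun x => (hpos x).ne'
  have hρi : ContDiff ℝ ((⊤:ℕ∞) : WithTop ℕ∞) ρ := hρ.of_le (by simp)
  have hfi : ContDiff ℝ ((⊤:ℕ∞) : WithTop ℕ∞) f := hf.of_le (by simp)
  have ha : Differentiable ℝ ρ := hρi.differentiable (by norm_num)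
  have hρ1 : ContDiff ℝ ((⊤:ℕ∞) : WithTop ℕ∞) (deriv ρ) := (contDiff_infty_iff_deriv.mp hρi).2
  have hb : Differentiable ℝ (deriv ρ) := hρ1.differentiable (by norm_num)
  have hρ2 : ContDiff ℝ ((⊤:ℕ∞) : WithTop ℕ∞) (deriv (deriv ρ)) := (contDiff_infty_iff_deriv.mp hρ1).2
  have hc : Differentiable ℝ (deriv (deriv ρ)) := hρ2.differentiable (by norm_num)
  have hfd : Differentiable ℝ f := hfi.differentiable (by norm_num)
  have hf1c : ContDiff ℝ ((⊤:ℕ∞) : WithTop ℕ∞) (deriv f) := (contDiff_infty_iff_deriv.mp hfi).2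
  have hf1 : Differentiable ℝ (deriv f) := hf1c.differentiable (by norm_num)
  have hf2c : ContDiff ℝ ((⊤:ℕ∞) : WithTop ℕ∞) (deriv (deriv f)) := (contDiff_infty_iff_deriv.mp hf1c).2
  have hf2 : Differentiable ℝ (deriv (deriv f)) := hf2c.differentiable (by norm_num)
  have HA : ∀ x, HasDerivAt ρ (deriv ρ x) x := fun x => (ha x).hasDerivAt
  have HB : ∀ x, HasDerivAt (deriv ρ) (deriv (deriv ρ) x) x := fun x => (hb x).hasDerivAt
  have HC : ∀ x, HasDerivAt (deriv (deriv ρ)) (deriv (deriv (deriv ρ)) x) x :=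
    fun x => (hc x).hasDerivAt
  have HF : ∀ x, HasDerivAt f (deriv f x) x := fun x => (hfd x).hasDerivAt
  have HF1 : ∀ x, HasDerivAt (deriv f) (deriv (deriv f) x) x := fun x => (hf1 x).hasDerivAt
  have HF2 : ∀ x, HasDerivAt (deriv f) (deriv (deriv f) x) x := fun x => (hf1 x).hasDerivAt
  have HF2' : ∀ x, HasDerivAt (deriv (deriv f)) (deriv (deriv (deriv f)) x) x :=
    fun x => (hf2 x).hasDerivAt
  -- first derivative of g = ρ⁻¹ f
  have h1 : deriv (fun t => (ρ t)⁻¹ * f t)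
      = fun t => -(deriv ρ t) / (ρ t) ^ 2 * f t + (ρ t)⁻¹ * deriv f t :=
    funext fun x => (((HA x).inv (ane x)).mul (HF x)).deriv
  -- second derivative
  have H2 : ∀ x, HasDerivAt (fun t => -(deriv ρ t) / (ρ t) ^ 2 * f t + (ρ t)⁻¹ * deriv f t)
      ((-(deriv (deriv ρ) x) / (ρ x) ^ 2 + 2 * (deriv ρ x) ^ 2 / (ρ x) ^ 3) * f x
        - 2 * (deriv ρ x) / (ρ x) ^ 2 * deriv f x + (ρ x)⁻¹ * deriv (deriv f) x) x := by
    intro x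
    have raw := ((((HB x).neg.div ((HA x).pow 2) (pow_ne_zero 2 (ane x))).mul (HF x)).add
      (((HA x).inv (ane x)).mul (HF1 x)))
    refine raw.congr_deriv ?_
    simp only [Pi.pow_apply, Pi.div_apply, Pi.neg_apply, Pi.inv_apply, Pi.mul_apply, Pi.add_apply, Pi.sub_apply]
    have := ane x
    field_simp
    ring
  have h2 : deriv (fun t => -(deriv ρ t) / (ρ t) ^ 2 * f t + (ρ t)⁻¹ * deriv f t)
      = fun x => (-(deriv (deriv ρ) x) / (ρ x) ^ 2 + 2 * (deriv ρ x) ^ 2 / (ρ x) ^ 3) * f x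
        - 2 * (deriv ρ x) / (ρ x) ^ 2 * deriv f x + (ρ x)⁻¹ * deriv (deriv f) x :=
    funext fun x => (H2 x).deriv
  -- third derivative
  have H3 : ∀ x, HasDerivAt (fun x => (-(deriv (deriv ρ) x) / (ρ x) ^ 2
        + 2 * (deriv ρ x) ^ 2 / (ρ x) ^ 3) * f x
        - 2 * (deriv ρ x) / (ρ x) ^ 2 * deriv f x + (ρ x)⁻¹ * deriv (deriv f) x)
      ((-(deriv (deriv (deriv ρ)) x) / (ρ x) ^ 2
          + 6 * deriv ρ x * deriv (deriv ρ) x / (ρ x) ^ 3 - 6 * (deriv ρ x) ^ 3 / (ρ x) ^ 4) * f x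
        + (-3 * deriv (deriv ρ) x / (ρ x) ^ 2 + 6 * (deriv ρ x) ^ 2 / (ρ x) ^ 3) * deriv f x
        - 3 * deriv ρ x / (ρ x) ^ 2 * deriv (deriv f) x
        + (ρ x)⁻¹ * deriv (deriv (deriv f)) x) x := by
    intro x
    have rawA := (((HC x).neg.div ((HA x).pow 2) (pow_ne_zero 2 (ane x))).add
      ((((HB x).pow 2).const_mul (2:ℝ)).div ((HA x).pow 3) (pow_ne_zero 3 (ane x)))).mul (HF x)
    have rawB := (((HB x).const_mul (2:ℝ)).div ((HA x).pow 2) (pow_ne_zero 2 (ane x))).mul (HF1 x)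
    have rawC := ((HA x).inv (ane x)).mul (HF2' x)
    have raw := (rawA.sub rawB).add rawC
    refine raw.congr_deriv ?_
    simp only [Pi.pow_apply, Pi.div_apply, Pi.neg_apply, Pi.inv_apply, Pi.mul_apply, Pi.add_apply, Pi.sub_apply]
    have := ane x
    field_simp
    ring
  intro x
  have hax := ane x
  -- Df as a function
  have hDf : D f = fun t => (ρ t)⁻¹ * deriv f t := funext (hD f)
  have hdf1 : deriv (fun t => (ρ t)⁻¹ * deriv f t)
      = fun t => -(deriv ρ t) / (ρ t) ^ 2 * deriv f t + (ρ t)⁻¹ * deriv (deriv f) t :=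
    funext fun x => (((HA x).inv (ane x)).mul (HF1 x)).deriv
  have hDDf : D (D f) = fun t => (ρ t)⁻¹ *
      (-(deriv ρ t) / (ρ t) ^ 2 * deriv f t + (ρ t)⁻¹ * deriv (deriv f) t) := by
    funext t
    rw [hD, hDf, hdf1]
  have HDDD : HasDerivAt (fun t => (ρ t)⁻¹ *
      (-(deriv ρ t) / (ρ t) ^ 2 * deriv f t + (ρ t)⁻¹ * deriv (deriv f) t))
      ((3 * (deriv ρ x) ^ 2 / (ρ x) ^ 4 - deriv (deriv ρ) x / (ρ x) ^ 3) * deriv f x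
        - 3 * deriv ρ x / (ρ x) ^ 3 * deriv (deriv f) x
        + ((ρ x) ^ 2)⁻¹ * deriv (deriv (deriv f)) x) x := by
    have inner := ((((HB x).neg.div ((HA x).pow 2) (pow_ne_zero 2 (ane x))).mul (HF1 x)).add
      (((HA x).inv (ane x)).mul (HF2' x)))
    have raw := ((HA x).inv (ane x)).mul
      (((((HB x).neg.div ((HA x).pow 2) (pow_ne_zero 2 (ane x))).mul (HF1 x)).add
      (((HA x).inv (ane x)).mul (HF2' x))))
    refine raw.congr_deriv ?_
    simp only [Pi.pow_apply, Pi.div_apply, Pi.neg_apply, Pi.inv_apply, Pi.mul_apply, Pi.add_apply, Pi.sub_apply]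
    field_simp
    ring
  -- Q as explicit function
  have hQfun : Q = fun t => -(1/4) / (ρ t) ^ 2 + (3/4) * (deriv ρ t) ^ 2 / (ρ t) ^ 4
      - (1/2) * deriv (deriv ρ) t / (ρ t) ^ 3 := by
    funext t
    rw [hQ]
    simp only [zpow_neg, zpow_ofNat]
    have := ane t
    field_simp
  have HQE : HasDerivAt (fun t => -(1/4) / (ρ t) ^ 2 + (3/4) * (deriv ρ t) ^ 2 / (ρ t) ^ 4
      - (1/2) * deriv (deriv ρ) t / (ρ t) ^ 3)
      ((1/2) * deriv ρ x / (ρ x) ^ 3 - 3 * (deriv ρ x) ^ 3 / (ρ x) ^ 5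
        + 3 * deriv ρ x * deriv (deriv ρ) x / (ρ x) ^ 4
        - (1/2) * deriv (deriv (deriv ρ)) x / (ρ x) ^ 3) x := by
    have raw := (((hasDerivAt_const x (-(1/4):ℝ)).div ((HA x).pow 2) (pow_ne_zero 2 (ane x))).add
      ((((HB x).pow 2).const_mul ((3:ℝ)/4)).div ((HA x).pow 4) (pow_ne_zero 4 (ane x)))).sub
      (((HC x).const_mul ((1:ℝ)/2)).div ((HA x).pow 3) (pow_ne_zero 3 (ane x)))
    refine raw.congr_deriv ?_
    simp only [Pi.pow_apply, Pi.div_apply, Pi.neg_apply, Pi.inv_apply, Pi.mul_apply, Pi.add_apply, Pi.sub_apply]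
    field_simp
    ring
  have hQF : (fun t => Q t * f t) = fun t => (-(1/4) / (ρ t) ^ 2
      + (3/4) * (deriv ρ t) ^ 2 / (ρ t) ^ 4 - (1/2) * deriv (deriv ρ) t / (ρ t) ^ 3) * f t := by
    funext t; rw [hQfun]
  have HQf : HasDerivAt (fun t => (-(1/4) / (ρ t) ^ 2
      + (3/4) * (deriv ρ t) ^ 2 / (ρ t) ^ 4 - (1/2) * deriv (deriv ρ) t / (ρ t) ^ 3) * f t) _ x :=
    HQE.mul (HF x)
  -- rewrite everything
  rw [hD (D (D f)), hDDf, HDDD.deriv, hD f, hD (fun t => Q t * f t), hQF, HQf.deriv, hQ]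
  simp only [h1, h2, (H3 x).deriv]
  have h2' : (ρ x) ^ (-2:ℤ) = ((ρ x) ^ 2)⁻¹ := by
    rw [zpow_neg, zpow_ofNat]
  have h3' : (ρ x) ^ (-3:ℤ) = ((ρ x) ^ 3)⁻¹ := by
    rw [zpow_neg, zpow_ofNat]
  have h4' : (ρ x) ^ (-4:ℤ) = ((ρ x) ^ 4)⁻¹ := by
    rw [zpow_neg, zpow_ofNat]
  rw [h2', h3', h4']
  field_simp
  ring
end

section
/- Let m, n: ℝ → ℝ be smooth and everywhere positive, Δ := mn, D := Δ^{-1/3}·d/dx, and Q := Δ^{-2/3} + (1/6)Δ^{-5/3}Δ'' - (7/36)Δ^{-8/3}(Δ')². Then for every smooth f: ℝ → ℝ, Δ^{-1/2}·( (Δ^{-1/6}f) - (Δ^{-1/6}f)'' ) = Q·f - D(Df). -/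
theorem stmt9 (m n f : ℝ → ℝ) (hm : ContDiff ℝ (⊤ : ℕ∞) m) (hn : ContDiff ℝ (⊤ : ℕ∞) n)
    (hf : ContDiff ℝ (⊤ : ℕ∞) f) (hmpos : ∀ x, 0 < m x) (hnpos : ∀ x, 0 < n x)
    (Δ : ℝ → ℝ) (hΔ : ∀ x, Δ x = m x * n x)
    (D : (ℝ → ℝ) → (ℝ → ℝ)) (hD : ∀ g x, D g x = (Δ x) ^ (-(1:ℝ)/3) * deriv g x)
    (Q : ℝ → ℝ)
    (hQ : ∀ x, Q x = (Δ x) ^ (-(2:ℝ)/3)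
      + (1/6) * (Δ x) ^ (-(5:ℝ)/3) * deriv (deriv Δ) x
      - (7/36) * (Δ x) ^ (-(8:ℝ)/3) * (deriv Δ x) ^ 2) :
    ∀ x, (Δ x) ^ (-(1:ℝ)/2) *
        (((Δ x) ^ (-(1:ℝ)/6) * f x)
          - deriv (deriv (fun t => (Δ t) ^ (-(1:ℝ)/6) * f t)) x)
      = Q x * f x - D (D f) x := by
  have hΔfun : Δ = fun x => m x * n x := funext hΔ
  have hΔs : ContDiff ℝ (⊤ : ℕ∞) Δ := by rw [hΔfun]; exact hm.mul hn
  have hΔpos : ∀ x, 0 < Δ x := fun x => by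
    rw [hΔ]; exact mul_pos (hmpos x) (hnpos x)
  have hΔd : Differentiable ℝ Δ := hΔs.differentiable (by simp)
  have hΔ'd : Differentiable ℝ (deriv Δ) :=
    ((contDiff_infty_iff_deriv.mp (hΔs.of_le (by simp))).2).differentiable (by simp)
  have hfd : Differentiable ℝ f := hf.differentiable (by simp)
  have hf'd : Differentiable ℝ (deriv f) :=
    ((contDiff_infty_iff_deriv.mp (hf.of_le (by simp))).2).differentiable (by simp)
  have hrpow : ∀ (c : ℝ) (y : ℝ),
      HasDerivAt (fun t => Δ t ^ c) (c * Δ y ^ (c - 1) * deriv Δ y) y := by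
    intro c y
    have h1 : HasDerivAt (fun s : ℝ => s ^ c) (c * Δ y ^ (c - 1)) (Δ y) := by
      simpa using Real.hasDerivAt_rpow_const (p := c) (Or.inl (hΔpos y).ne')
    simpa [Function.comp_def, mul_assoc] using h1.comp y (hΔd y).hasDerivAt
  intro x
  -- first derivative of Δ^(-1/6) * f, as a function
  have hDg : ∀ y, HasDerivAt (fun t => Δ t ^ (-(1:ℝ)/6) * f t)
      (-(1:ℝ)/6 * Δ y ^ (-(1:ℝ)/6 - 1) * deriv Δ y * f y
        + Δ y ^ (-(1:ℝ)/6) * deriv f y) y := by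
    intro y
    exact (hrpow (-(1:ℝ)/6) y).mul (hfd y).hasDerivAt
  have hd1 : deriv (fun t => Δ t ^ (-(1:ℝ)/6) * f t)
      = fun y => -(1:ℝ)/6 * Δ y ^ (-(1:ℝ)/6 - 1) * deriv Δ y * f y
        + Δ y ^ (-(1:ℝ)/6) * deriv f y := funext fun y => (hDg y).deriv
  -- second derivative
  have t1 : HasDerivAt (fun t => -(1:ℝ)/6 * Δ t ^ (-(1:ℝ)/6 - 1))
      (-(1:ℝ)/6 * ((-(1:ℝ)/6 - 1) * Δ x ^ (-(1:ℝ)/6 - 1 - 1) * deriv Δ x)) x :=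
    (hrpow (-(1:ℝ)/6 - 1) x).const_mul (-(1:ℝ)/6)
  have t2 : HasDerivAt (fun t => -(1:ℝ)/6 * Δ t ^ (-(1:ℝ)/6 - 1) * deriv Δ t)
      (-(1:ℝ)/6 * ((-(1:ℝ)/6 - 1) * Δ x ^ (-(1:ℝ)/6 - 1 - 1) * deriv Δ x) * deriv Δ x
        + -(1:ℝ)/6 * Δ x ^ (-(1:ℝ)/6 - 1) * deriv (deriv Δ) x) x :=
    t1.mul (hΔ'd x).hasDerivAt
  have t3 : HasDerivAt (fun t => -(1:ℝ)/6 * Δ t ^ (-(1:ℝ)/6 - 1) * deriv Δ t * f t)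
      ((-(1:ℝ)/6 * ((-(1:ℝ)/6 - 1) * Δ x ^ (-(1:ℝ)/6 - 1 - 1) * deriv Δ x) * deriv Δ x
        + -(1:ℝ)/6 * Δ x ^ (-(1:ℝ)/6 - 1) * deriv (deriv Δ) x) * f x
        + -(1:ℝ)/6 * Δ x ^ (-(1:ℝ)/6 - 1) * deriv Δ x * deriv f x) x :=
    t2.mul (hfd x).hasDerivAt
  have t4 : HasDerivAt (fun t => Δ t ^ (-(1:ℝ)/6) * deriv f t)
      (-(1:ℝ)/6 * Δ x ^ (-(1:ℝ)/6 - 1) * deriv Δ x * deriv f x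
        + Δ x ^ (-(1:ℝ)/6) * deriv (deriv f) x) x :=
    (hrpow (-(1:ℝ)/6) x).mul (hf'd x).hasDerivAt
  have hd2 : HasDerivAt (fun y => -(1:ℝ)/6 * Δ y ^ (-(1:ℝ)/6 - 1) * deriv Δ y * f y
        + Δ y ^ (-(1:ℝ)/6) * deriv f y)
      ((-(1:ℝ)/6 * ((-(1:ℝ)/6 - 1) * Δ x ^ (-(1:ℝ)/6 - 1 - 1) * deriv Δ x) * deriv Δ x
        + -(1:ℝ)/6 * Δ x ^ (-(1:ℝ)/6 - 1) * deriv (deriv Δ) x) * f x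
        + -(1:ℝ)/6 * Δ x ^ (-(1:ℝ)/6 - 1) * deriv Δ x * deriv f x
        + (-(1:ℝ)/6 * Δ x ^ (-(1:ℝ)/6 - 1) * deriv Δ x * deriv f x
          + Δ x ^ (-(1:ℝ)/6) * deriv (deriv f) x)) x := t3.add t4
  -- D f as a function and derivative of it
  have hDf : D f = fun y => Δ y ^ (-(1:ℝ)/3) * deriv f y := by
    funext y; exact hD f y
  have hd3 : HasDerivAt (fun y => Δ y ^ (-(1:ℝ)/3) * deriv f y)
      (-(1:ℝ)/3 * Δ x ^ (-(1:ℝ)/3 - 1) * deriv Δ x * deriv f x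
        + Δ x ^ (-(1:ℝ)/3) * deriv (deriv f) x) x :=
    (hrpow (-(1:ℝ)/3) x).mul (hf'd x).hasDerivAt
  rw [hQ x, hD (D f) x, hDf, hd3.deriv, hd1, hd2.deriv]
  -- convert all rpow exponents to powers of A := Δ x ^ (-(1:ℝ)/6)
  have hA : ∀ (k : ℕ) (e : ℝ), e = -(k:ℝ)/6 → Δ x ^ e = (Δ x ^ (-(1:ℝ)/6)) ^ k := by
    intro k e he
    rw [he, show -(k:ℝ)/6 = (-(1:ℝ)/6) * (k:ℝ) by ring,
      Real.rpow_mul (hΔpos x).le, Real.rpow_natCast]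
  rw [hA 7 (-(1:ℝ)/6 - 1) (by norm_num), hA 13 (-(1:ℝ)/6 - 1 - 1) (by norm_num),
    hA 3 (-(1:ℝ)/2) (by norm_num), hA 4 (-(2:ℝ)/3) (by norm_num),
    hA 10 (-(5:ℝ)/3) (by norm_num), hA 16 (-(8:ℝ)/3) (by norm_num),
    hA 8 (-(1:ℝ)/3 - 1) (by norm_num), hA 2 (-(1:ℝ)/3) (by norm_num),
    hA 1 (-(1:ℝ)/6) (by norm_num)]
  have hpow : ∀ (a b : ℕ), (Δ x ^ (-(1:ℝ)/6)) ^ a * (Δ x ^ (-(1:ℝ)/6)) ^ b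
      = (Δ x ^ (-(1:ℝ)/6)) ^ (a + b) := fun a b => (pow_add _ a b).symm
  ring
end

section
/- Let m, n: ℝ → ℝ be smooth and everywhere positive, Δ := mn, D := Δ^{-1/3}·d/dx, and Q := Δ^{-2/3} + (1/6)Δ^{-5/3}Δ'' - (7/36)Δ^{-8/3}(Δ')². Then for every smooth f: ℝ → ℝ, Δ^{-2/3}·( (Δ^{-1/3}f)''' - 4(Δ^{-1/3}f)' ) = D³f - 2Q·Df - 2·D(Q·f). -/
set_option maxHeartbeats 2000000 in
theorem stmt10 (m n f : ℝ → ℝ) (hm : ContDiff ℝ (⊤ : ℕ∞) m) (hn : ContDiff ℝ (⊤ : ℕ∞) n)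
    (hf : ContDiff ℝ (⊤ : ℕ∞) f) (hmpos : ∀ x, 0 < m x) (hnpos : ∀ x, 0 < n x)
    (Δ : ℝ → ℝ) (hΔ : ∀ x, Δ x = m x * n x)
    (D : (ℝ → ℝ) → (ℝ → ℝ)) (hD : ∀ g x, D g x = (Δ x) ^ (-(1:ℝ)/3) * deriv g x)
    (Q : ℝ → ℝ)
    (hQ : ∀ x, Q x = (Δ x) ^ (-(2:ℝ)/3)
      + (1/6) * (Δ x) ^ (-(5:ℝ)/3) * deriv (deriv Δ) x
      - (7/36) * (Δ x) ^ (-(8:ℝ)/3) * (deriv Δ x) ^ 2) :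
    ∀ x, (Δ x) ^ (-(2:ℝ)/3) *
        (deriv (deriv (deriv (fun t => (Δ t) ^ (-(1:ℝ)/3) * f t))) x
          - 4 * deriv (fun t => (Δ t) ^ (-(1:ℝ)/3) * f t) x)
      = D (D (D f)) x - 2 * Q x * D f x - 2 * D (fun t => Q t * f t) x := by
  have hΔpos : ∀ x, 0 < Δ x := fun x => by rw [hΔ]; exact mul_pos (hmpos x) (hnpos x)
  have hΔcd : ContDiff ℝ (⊤ : ℕ∞) Δ := by
    have : Δ = fun x => m x * n x := funext hΔ
    rw [this]; exact (hm.of_le (by simp)).mul (hn.of_le (by simp))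
  have hfcd : ContDiff ℝ (⊤ : ℕ∞) f := hf.of_le (by simp)
  set w : ℝ → ℝ := fun x => Δ x ^ ((1:ℝ)/3) with hw_def
  have hwpos : ∀ x, 0 < w x := fun x => Real.rpow_pos_of_pos (hΔpos x) _
  have hwne : ∀ x, w x ≠ 0 := fun x => (hwpos x).ne'
  have hwcd : ContDiff ℝ (⊤ : ℕ∞) w := by
    rw [contDiff_iff_contDiffAt]
    intro x
    exact (Real.contDiffAt_rpow_const_of_ne (ne_of_gt (hΔpos x))).comp x hΔcd.contDiffAt
  -- differentiability of iterated derivatives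
  have hwd : Differentiable ℝ w := hwcd.differentiable (by simp)
  have hw1cd : ContDiff ℝ (⊤ : ℕ∞) (deriv w) := (contDiff_infty_iff_deriv.mp hwcd).2
  have hw1d : Differentiable ℝ (deriv w) := hw1cd.differentiable (by simp)
  have hw2cd : ContDiff ℝ (⊤ : ℕ∞) (deriv (deriv w)) := (contDiff_infty_iff_deriv.mp hw1cd).2
  have hw2d : Differentiable ℝ (deriv (deriv w)) := hw2cd.differentiable (by simp)
  have hfd : Differentiable ℝ f := hfcd.differentiable (by simp)
  have hf1cd : ContDiff ℝ (⊤ : ℕ∞) (deriv f) := (contDiff_infty_iff_deriv.mp hfcd).2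
  have hf1d : Differentiable ℝ (deriv f) := hf1cd.differentiable (by simp)
  have hf2cd : ContDiff ℝ (⊤ : ℕ∞) (deriv (deriv f)) := (contDiff_infty_iff_deriv.mp hf1cd).2
  have hf2d : Differentiable ℝ (deriv (deriv f)) := hf2cd.differentiable (by simp)
  -- rpow identities
  have hkey : ∀ (k : ℕ) (x : ℝ), Δ x ^ (-(k : ℝ)/3) = ((w x) ^ k)⁻¹ := by
    intro k x
    have h1 : (-(k : ℝ)/3) = ((1:ℝ)/3) * (-(k : ℝ)) := by ring
    rw [h1, Real.rpow_mul (hΔpos x).le, Real.rpow_neg (Real.rpow_nonneg (hΔpos x).le _),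
      Real.rpow_natCast]
  have key1 : ∀ x : ℝ, Δ x ^ (-(1:ℝ)/3) = (w x)⁻¹ := by
    intro x
    rw [show (-(1:ℝ)/3) = (-((1:ℕ):ℝ)/3) by push_cast; ring]
    rw [hkey 1 x, pow_one]
  have key2 : ∀ x : ℝ, Δ x ^ (-(2:ℝ)/3) = ((w x) ^ 2)⁻¹ := by
    intro x
    rw [show (-(2:ℝ)/3) = (-((2:ℕ):ℝ)/3) by push_cast; ring]
    exact hkey 2 x
  have key5 : ∀ x : ℝ, Δ x ^ (-(5:ℝ)/3) = ((w x) ^ 5)⁻¹ := by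
    intro x
    rw [show (-(5:ℝ)/3) = (-((5:ℕ):ℝ)/3) by push_cast; ring]
    exact hkey 5 x
  have key8 : ∀ x : ℝ, Δ x ^ (-(8:ℝ)/3) = ((w x) ^ 8)⁻¹ := by
    intro x
    rw [show (-(8:ℝ)/3) = (-((8:ℕ):ℝ)/3) by push_cast; ring]
    exact hkey 8 x
  have hΔcube : Δ = fun x => w x ^ 3 := by
    funext x
    have : w x ^ 3 = (Δ x ^ ((1:ℝ)/3)) ^ ((3:ℕ) : ℝ) := by
      rw [Real.rpow_natCast]
    rw [this, ← Real.rpow_mul (hΔpos x).le]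
    norm_num
  -- derivatives of Δ in terms of w
  have hΔ1 : deriv Δ = fun x => 3 * w x ^ 2 * deriv w x := by
    rw [hΔcube]
    funext x
    erw [((hwd x).hasDerivAt.pow 3).deriv]
    push_cast
    ring
  have hΔ2 : deriv (deriv Δ)
      = fun x => 6 * w x * (deriv w x) ^ 2 + 3 * w x ^ 2 * deriv (deriv w) x := by
    rw [hΔ1]
    funext x
    have H : HasDerivAt (fun t => 3 * w t ^ 2 * deriv w t)
        ((3 * (2 * w x ^ 1 * deriv w x)) * deriv w x
          + 3 * w x ^ 2 * deriv (deriv w) x) x :=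
      (((hwd x).hasDerivAt.pow 2).const_mul 3).mul (hw1d x).hasDerivAt
    rw [H.deriv]
    ring
  -- Q in terms of w
  have hQfun : Q = fun x =>
      ((w x) ^ 2 + (1/2) * w x * deriv (deriv w) x - (3/4) * (deriv w x) ^ 2) / (w x) ^ 4 := by
    funext x
    have hx := hwne x
    rw [hQ x, key2, key5, key8, hΔ2]
    simp only [hΔ1]
    field_simp
    ring
  -- LHS function chain
  have hgfun : (fun t => Δ t ^ (-(1:ℝ)/3) * f t) = fun t => (w t)⁻¹ * f t := by
    funext t; rw [key1]
  have hg1 : deriv (fun t => (w t)⁻¹ * f t)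
      = fun t => (-(deriv w t) * f t + w t * deriv f t) / (w t) ^ 2 := by
    funext x
    have hx := hwne x
    have H := ((hwd x).hasDerivAt.inv hx).mul (hfd x).hasDerivAt
    erw [H.deriv]
    simp only [Pi.add_apply, Pi.sub_apply, Pi.mul_apply, Pi.neg_apply, Pi.inv_apply, Pi.pow_apply, Pi.div_apply]
    field_simp
  have hg2 : deriv (fun t => (-(deriv w t) * f t + w t * deriv f t) / (w t) ^ 2)
      = fun t => ((2 * (deriv w t) ^ 2 - w t * deriv (deriv w) t) * f t
          - 2 * w t * deriv w t * deriv f t + (w t) ^ 2 * deriv (deriv f) t) / (w t) ^ 3 := by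
    funext x
    have hx := hwne x
    have H := ((((hw1d x).hasDerivAt.neg.mul (hfd x).hasDerivAt).add
        ((hwd x).hasDerivAt.mul (hf1d x).hasDerivAt)).div
        ((hwd x).hasDerivAt.pow 2) (pow_ne_zero 2 hx))
    erw [H.deriv]
    simp only [Pi.add_apply, Pi.sub_apply, Pi.mul_apply, Pi.neg_apply, Pi.inv_apply, Pi.pow_apply, Pi.div_apply]
    field_simp
    ring
  have hg3 : deriv (fun t => ((2 * (deriv w t) ^ 2 - w t * deriv (deriv w) t) * f t
          - 2 * w t * deriv w t * deriv f t + (w t) ^ 2 * deriv (deriv f) t) / (w t) ^ 3)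
      = fun t => ((-(deriv (deriv (deriv w)) t) * w t ^ 2
            + 6 * w t * deriv w t * deriv (deriv w) t - 6 * (deriv w t) ^ 3) * f t
          + (-(3 * w t ^ 2 * deriv (deriv w) t) + 6 * w t * (deriv w t) ^ 2) * deriv f t
          - 3 * w t ^ 2 * deriv w t * deriv (deriv f) t
          + w t ^ 3 * deriv (deriv (deriv f)) t) / (w t) ^ 4 := by
    funext x
    have hx := hwne x
    have Hnum := ((((((hw1d x).hasDerivAt.pow 2).const_mul 2).sub
          ((hwd x).hasDerivAt.mul (hw2d x).hasDerivAt)).mul (hfd x).hasDerivAt).sub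
        ((((hwd x).hasDerivAt.const_mul 2).mul (hw1d x).hasDerivAt).mul
          (hf1d x).hasDerivAt)).add
        (((hwd x).hasDerivAt.pow 2).mul (hf2d x).hasDerivAt)
    have H := Hnum.div ((hwd x).hasDerivAt.pow 3) (pow_ne_zero 3 hx)
    erw [H.deriv]
    simp only [Pi.add_apply, Pi.sub_apply, Pi.mul_apply, Pi.neg_apply, Pi.inv_apply, Pi.pow_apply, Pi.div_apply]
    field_simp
    ring
  -- RHS function chain
  have hDf : D f = fun t => deriv f t / w t := by
    funext x; rw [hD, key1, inv_mul_eq_div]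
  have hDDf : D (D f)
      = fun t => (w t * deriv (deriv f) t - deriv w t * deriv f t) / (w t) ^ 3 := by
    funext x
    have hx := hwne x
    rw [hD, key1, hDf]
    have H := (hf1d x).hasDerivAt.div (hwd x).hasDerivAt hx
    erw [H.deriv]
    field_simp
  have hDDDf : D (D (D f))
      = fun t => ((w t) ^ 2 * deriv (deriv (deriv f)) t
          - 3 * w t * deriv w t * deriv (deriv f) t
          + (3 * (deriv w t) ^ 2 - w t * deriv (deriv w) t) * deriv f t) / (w t) ^ 5 := by
    funext x
    have hx := hwne x
    rw [hD, key1, hDDf]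
    have Hnum := (((hwd x).hasDerivAt.mul (hf2d x).hasDerivAt).sub
        ((hw1d x).hasDerivAt.mul (hf1d x).hasDerivAt))
    have H := Hnum.div ((hwd x).hasDerivAt.pow 3) (pow_ne_zero 3 hx)
    erw [H.deriv]
    simp only [Pi.add_apply, Pi.sub_apply, Pi.mul_apply, Pi.neg_apply, Pi.inv_apply, Pi.pow_apply, Pi.div_apply]
    field_simp
    ring
  have hDQf : D (fun t => Q t * f t)
      = fun t => ((-(2 * w t ^ 2 * deriv w t) + (1/2) * w t ^ 2 * deriv (deriv (deriv w)) t
            - 3 * w t * deriv w t * deriv (deriv w) t + 3 * (deriv w t) ^ 3) * f t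
          + (w t ^ 3 + (1/2) * w t ^ 2 * deriv (deriv w) t
            - (3/4) * w t * (deriv w t) ^ 2) * deriv f t) / (w t) ^ 6 := by
    funext x
    have hx := hwne x
    rw [hD, key1, hQfun]
    have Hnum := (((hwd x).hasDerivAt.pow 2).add
        (((hwd x).hasDerivAt.const_mul (1/2:ℝ)).mul (hw2d x).hasDerivAt)).sub
        (((hw1d x).hasDerivAt.pow 2).const_mul (3/4:ℝ))
    have H := (Hnum.div ((hwd x).hasDerivAt.pow 4) (pow_ne_zero 4 hx)).mul
        (hfd x).hasDerivAt
    rw [show (fun t => ((w t) ^ 2 + (1/2) * w t * deriv (deriv w) t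
          - (3/4) * (deriv w t) ^ 2) / (w t) ^ 4 * f t)
        = (fun t => (w t ^ 2 + (1/2 : ℝ) * w t * deriv (deriv w) t
          - (3/4 : ℝ) * (deriv w t) ^ 2) / (w t) ^ 4 * f t) from rfl]
    erw [H.deriv]
    simp only [Pi.add_apply, Pi.sub_apply, Pi.mul_apply, Pi.neg_apply, Pi.inv_apply, Pi.pow_apply, Pi.div_apply]
    field_simp
    ring
  -- assemble
  intro x
  have hx := hwne x
  rw [key2, hgfun, hg1, hg2, hg3, hDDDf, hDf, hDQf, hQfun]
  field_simp
  ring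
end

section
/- Let m, n: ℝ → ℝ be smooth and everywhere positive, D := (mn)^{-1/3}·d/dx, P := ½·m^{-4/3}n^{2/3}·(m/n)', and let Q := (mn)^{-2/3} + (1/6)(mn)^{-5/3}(mn)'' - (7/36)(mn)^{-8/3}((mn)')². Define the operator Θf := D²f + P·Df + D(P·f) + P²·f - Q·f. Then for every smooth f, (m/n)^{-1/2}·( Q·((m/n)^{1/2}f) - D²((m/n)^{1/2}f) ) = -Θf. -/
private lemma c1 (a b : ℝ) (ha : 0 < a) (hb : 0 < b) :
    (a*b) ^ (-(1:ℝ)/3) * ((1/2) * (a/b) ^ (-(1:ℝ)/2))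
      = (a/b) ^ ((1:ℝ)/2) * ((1/2) * a ^ (-(4:ℝ)/3) * b ^ ((2:ℝ)/3)) := by
  rw [Real.rpow_def_of_pos ha, Real.rpow_def_of_pos hb,
    Real.rpow_def_of_pos (div_pos ha hb), Real.rpow_def_of_pos (div_pos ha hb),
    Real.rpow_def_of_pos (mul_pos ha hb), Real.log_div ha.ne' hb.ne',
    Real.log_mul ha.ne' hb.ne']
  rw [show ∀ u v c : ℝ, Real.exp u * (c * Real.exp v) = c * Real.exp (u + v) from
      fun u v c => by rw [Real.exp_add]; ring,
    show ∀ u c v w : ℝ, Real.exp u * (c * Real.exp v * Real.exp w)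
        = c * Real.exp (u + v + w) from
      fun u c v w => by rw [Real.exp_add, Real.exp_add]; ring]
  congr 1
  ring_nf

theorem stmt13 (m n f : ℝ → ℝ) (hm : ContDiff ℝ (⊤ : ℕ∞) m) (hn : ContDiff ℝ (⊤ : ℕ∞) n)
    (hf : ContDiff ℝ (⊤ : ℕ∞) f) (hmpos : ∀ x, 0 < m x) (hnpos : ∀ x, 0 < n x)
    (D : (ℝ → ℝ) → (ℝ → ℝ))
    (hD : ∀ g x, D g x = (m x * n x) ^ (-(1:ℝ)/3) * deriv g x)
    (P : ℝ → ℝ)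
    (hP : ∀ x, P x = (1/2) * (m x) ^ (-(4:ℝ)/3) * (n x) ^ ((2:ℝ)/3)
      * deriv (fun t => m t / n t) x)
    (Q : ℝ → ℝ)
    (hQ : ∀ x, Q x = (m x * n x) ^ (-(2:ℝ)/3)
      + (1/6) * (m x * n x) ^ (-(5:ℝ)/3) * deriv (deriv (fun t => m t * n t)) x
      - (7/36) * (m x * n x) ^ (-(8:ℝ)/3) * (deriv (fun t => m t * n t) x) ^ 2)
    (Θ : (ℝ → ℝ) → (ℝ → ℝ))
    (hΘ : ∀ g x, Θ g x = D (D g) x + P x * D g x + D (fun t => P t * g t) x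
      + (P x) ^ 2 * g x - Q x * g x) :
    ∀ x, (m x / n x) ^ (-(1:ℝ)/2) *
        (Q x * ((m x / n x) ^ ((1:ℝ)/2) * f x)
          - D (D (fun t => (m t / n t) ^ ((1:ℝ)/2) * f t)) x)
      = -(Θ f x) := by
  have hdiv : ContDiff ℝ (⊤ : ℕ∞) (fun t => m t / n t) := hm.div hn fun x => (hnpos x).ne'
  have hdivpos : ∀ x, 0 < m x / n x := fun x => div_pos (hmpos x) (hnpos x)
  have hmn : ContDiff ℝ (⊤ : ℕ∞) (fun t => m t * n t) := hm.mul hn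
  have hmnpos : ∀ x, 0 < m x * n x := fun x => mul_pos (hmpos x) (hnpos x)
  -- differentiability of t ↦ (m t * n t) ^ c at any point
  have hpow : ∀ (c : ℝ) (y : ℝ),
      HasDerivAt (fun t => (m t * n t) ^ c)
        (c * (m y * n y) ^ (c - 1) * deriv (fun t => m t * n t) y) y := by
    intro c y
    exact (Real.hasDerivAt_rpow_const (Or.inl (hmnpos y).ne')).comp y
      ((hmn.differentiable (by simp) y).hasDerivAt)
  -- differentiability of φ = (m/n)^{1/2} at any point, with deriv value
  have hφd : ∀ y : ℝ,
      HasDerivAt (fun t => (m t / n t) ^ ((1:ℝ)/2))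
        (((1:ℝ)/2) * (m y / n y) ^ ((1:ℝ)/2 - 1) * deriv (fun t => m t / n t) y) y := by
    intro y
    exact (Real.hasDerivAt_rpow_const (Or.inl (hdivpos y).ne')).comp y
      ((hdiv.differentiable (by simp) y).hasDerivAt)
  -- key lemma A
  have lemA : ∀ (g : ℝ → ℝ) (x : ℝ), DifferentiableAt ℝ g x →
      D (fun t => (m t / n t) ^ ((1:ℝ)/2) * g t) x
        = (m x / n x) ^ ((1:ℝ)/2) * (D g x + P x * g x) := by
    intro g x hg
    rw [hD, hD, hP, deriv_fun_mul (hφd x).differentiableAt hg, (hφd x).deriv]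
    have he : ((1:ℝ)/2 - 1) = (-(1:ℝ)/2) := by norm_num
    rw [he]
    linear_combination (deriv (fun t => m t / n t) x * g x) *
      c1 (m x) (n x) (hmpos x) (hnpos x)
  -- differentiability facts
  have hf' : Differentiable ℝ (deriv f) :=
    (contDiff_infty_iff_deriv.mp ((contDiff_infty_iff_deriv.mp (hf.of_le (by simp))).2)).1
  have hd' : Differentiable ℝ (deriv (fun t => m t / n t)) :=
    (contDiff_infty_iff_deriv.mp ((contDiff_infty_iff_deriv.mp (hdiv.of_le (by simp))).2)).1
  have hDfdiff : ∀ y, DifferentiableAt ℝ (fun t => (m t * n t) ^ (-(1:ℝ)/3) * deriv f t) y :=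
    fun y => ((hpow (-(1:ℝ)/3) y).differentiableAt).mul (hf' y)
  have hPf : ∀ y, DifferentiableAt ℝ
      (fun t => (1/2) * (m t) ^ (-(4:ℝ)/3) * (n t) ^ ((2:ℝ)/3)
        * deriv (fun s => m s / n s) t * f t) y := by
    intro y
    have h1 : DifferentiableAt ℝ (fun t => (m t) ^ (-(4:ℝ)/3)) y :=
      ((Real.hasDerivAt_rpow_const (Or.inl (hmpos y).ne')).comp y
        ((hm.differentiable (by simp) y).hasDerivAt)).differentiableAt
    have h2 : DifferentiableAt ℝ (fun t => (n t) ^ ((2:ℝ)/3)) y :=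
      ((Real.hasDerivAt_rpow_const (Or.inl (hnpos y).ne')).comp y
        ((hn.differentiable (by simp) y).hasDerivAt)).differentiableAt
    exact ((((differentiableAt_const _).mul h1).mul h2).mul (hd' y)).mul
      (hf.differentiable (by simp) y)
  have hPfun : P = fun t => (1/2) * (m t) ^ (-(4:ℝ)/3) * (n t) ^ ((2:ℝ)/3)
      * deriv (fun s => m s / n s) t := funext hP
  have hDffun : D f = fun t => (m t * n t) ^ (-(1:ℝ)/3) * deriv f t := funext (hD f)
  intro x
  -- first application of lemA
  have step1 : D (fun t => (m t / n t) ^ ((1:ℝ)/2) * f t)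
      = fun t => (m t / n t) ^ ((1:ℝ)/2) * (D f t + P t * f t) :=
    funext fun y => lemA f y (hf.differentiable (by simp) y)
  rw [step1]
  -- second application of lemA with g = D f + P * f
  have hg : DifferentiableAt ℝ (fun t => D f t + P t * f t) x := by
    have : (fun t => D f t + P t * f t)
        = fun t => (m t * n t) ^ (-(1:ℝ)/3) * deriv f t
          + (1/2) * (m t) ^ (-(4:ℝ)/3) * (n t) ^ ((2:ℝ)/3)
            * deriv (fun s => m s / n s) t * f t := by
      funext t; rw [hD, hP]
    rw [this]
    exact (hDfdiff x).add (hPf x)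
  have step2 := lemA (fun t => D f t + P t * f t) x hg
  rw [step2]
  -- split D (Df + Pf) into D(Df) + D(Pf)
  have split : D (fun t => D f t + P t * f t) x
      = D (D f) x + D (fun t => P t * f t) x := by
    rw [hD, hD, hD]
    have hadd : deriv (fun t => D f t + P t * f t) x
        = deriv (D f) x + deriv (fun t => P t * f t) x := by
      have e1 : DifferentiableAt ℝ (D f) x := by rw [hDffun]; exact hDfdiff x
      have e2 : DifferentiableAt ℝ (fun t => P t * f t) x := by
        have : (fun t => P t * f t)
            = fun t => (1/2) * (m t) ^ (-(4:ℝ)/3) * (n t) ^ ((2:ℝ)/3)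
              * deriv (fun s => m s / n s) t * f t := by
          funext t; rw [hP]
        rw [this]; exact hPf x
      exact deriv_add e1 e2
    rw [hadd]; ring
  rw [split, hΘ]
  have hinv : (m x / n x) ^ (-(1:ℝ)/2) * (m x / n x) ^ ((1:ℝ)/2) = 1 := by
    rw [← Real.rpow_add (hdivpos x)]; norm_num
  linear_combination (Q x * f x - D (D f) x - D (fun t => P t * f t) x
    - P x * (D f x + P x * f x)) * hinv
end

section
/- Let m, n be smooth positive functions of x, Δ := mn, D := Δ^{-1/3}·d/dx, Q as in the Geng–Xue Liouville transformation, P := ½m^{-4/3}n^{2/3}(m/n)', and Θf := D²f + P·Df + D(Pf) + P²f - Qf. Then for every smooth f: ℝ → ℝ, (m^{1/3}n^{-2/3}·f)'' - m^{1/3}n^{-2/3}·f = m·Θf. -/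
set_option maxHeartbeats 4000000 in
set_option maxRecDepth 16000 in
theorem stmt15 (m n f : ℝ → ℝ) (hm : ContDiff ℝ (⊤ : ℕ∞) m) (hn : ContDiff ℝ (⊤ : ℕ∞) n)
    (hf : ContDiff ℝ (⊤ : ℕ∞) f) (hmpos : ∀ x, 0 < m x) (hnpos : ∀ x, 0 < n x)
    (D : (ℝ → ℝ) → (ℝ → ℝ))
    (hD : ∀ g x, D g x = (m x * n x) ^ (-(1:ℝ)/3) * deriv g x)
    (P : ℝ → ℝ)
    (hP : ∀ x, P x = (1/2) * (m x) ^ (-(4:ℝ)/3) * (n x) ^ ((2:ℝ)/3)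
      * deriv (fun t => m t / n t) x)
    (Q : ℝ → ℝ)
    (hQ : ∀ x, Q x = (m x * n x) ^ (-(2:ℝ)/3)
      + (1/6) * (m x * n x) ^ (-(5:ℝ)/3) * deriv (deriv (fun t => m t * n t)) x
      - (7/36) * (m x * n x) ^ (-(8:ℝ)/3) * (deriv (fun t => m t * n t) x) ^ 2)
    (Θ : (ℝ → ℝ) → (ℝ → ℝ))
    (hΘ : ∀ g x, Θ g x = D (D g) x + P x * D g x + D (fun t => P t * g t) x
      + (P x) ^ 2 * g x - Q x * g x) :
    ∀ x, deriv (deriv (fun t => (m t) ^ ((1:ℝ)/3) * (n t) ^ (-(2:ℝ)/3) * f t)) x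
        - (m x) ^ ((1:ℝ)/3) * (n x) ^ (-(2:ℝ)/3) * f x
      = m x * Θ f x := by
  intro x
  have dm : Differentiable ℝ m := hm.differentiable (by simp)
  have dn : Differentiable ℝ n := hn.differentiable (by simp)
  have df : Differentiable ℝ f := hf.differentiable (by simp)
  have dm' : Differentiable ℝ (deriv m) :=
    ((contDiff_infty_iff_deriv.mp (hm.of_le (by simp) : ContDiff ℝ (⊤:ℕ∞) m)).2).differentiable
      (by simp)
  have dn' : Differentiable ℝ (deriv n) :=
    ((contDiff_infty_iff_deriv.mp (hn.of_le (by simp) : ContDiff ℝ (⊤:ℕ∞) n)).2).differentiable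
      (by simp)
  have df' : Differentiable ℝ (deriv f) :=
    ((contDiff_infty_iff_deriv.mp (hf.of_le (by simp) : ContDiff ℝ (⊤:ℕ∞) f)).2).differentiable
      (by simp)
  have Hm : ∀ t, HasDerivAt m (deriv m t) t := fun t => (dm t).hasDerivAt
  have Hn : ∀ t, HasDerivAt n (deriv n t) t := fun t => (dn t).hasDerivAt
  have Hf : ∀ t, HasDerivAt f (deriv f t) t := fun t => (df t).hasDerivAt
  have Hm' : ∀ t, HasDerivAt (deriv m) (deriv (deriv m) t) t := fun t => (dm' t).hasDerivAt
  have Hn' : ∀ t, HasDerivAt (deriv n) (deriv (deriv n) t) t := fun t => (dn' t).hasDerivAt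
  have Hf' : ∀ t, HasDerivAt (deriv f) (deriv (deriv f) t) t := fun t => (df' t).hasDerivAt
  have Rm : ∀ (s : ℝ) (t : ℝ),
      HasDerivAt (fun r => m r ^ s) (deriv m t * s * m t ^ (s - 1)) t :=
    fun s t => (Hm t).rpow_const (Or.inl (hmpos t).ne')
  have Rn : ∀ (s : ℝ) (t : ℝ),
      HasDerivAt (fun r => n r ^ s) (deriv n t * s * n t ^ (s - 1)) t :=
    fun s t => (Hn t).rpow_const (Or.inl (hnpos t).ne')
  have Rmn : ∀ (s : ℝ) (t : ℝ),
      HasDerivAt (fun r => (m r * n r) ^ s)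
        ((deriv m t * n t + m t * deriv n t) * s * (m t * n t) ^ (s - 1)) t :=
    fun s t => ((Hm t).mul (Hn t)).rpow_const
      (Or.inl (mul_pos (hmpos t) (hnpos t)).ne')
  -- derivative of m*n as a function
  have hΔ1 : deriv (fun t => m t * n t) = fun t => deriv m t * n t + m t * deriv n t :=
    funext fun t => ((Hm t).mul (Hn t)).deriv
  have hΔ2 : deriv (deriv (fun t => m t * n t)) x
      = (deriv (deriv m) x * n x + deriv m x * deriv n x)
        + (deriv m x * deriv n x + m x * deriv (deriv n) x) := by
    rw [hΔ1]
    exact (((Hm' x).mul (Hn x)).add ((Hm x).mul (Hn' x))).deriv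
  -- P as an explicit function
  have hPfun : P = fun t => 1/2 * m t ^ (-(4:ℝ)/3) * n t ^ ((2:ℝ)/3)
      * ((deriv m t * n t - m t * deriv n t) / n t ^ 2) := by
    funext t
    rw [hP t, show deriv (fun t => m t / n t) t = _ from ((Hm t).div (Hn t) (hnpos t).ne').deriv]
  -- first derivative of the LHS function
  have hgd : deriv (fun t => m t ^ ((1:ℝ)/3) * n t ^ (-(2:ℝ)/3) * f t)
      = fun t => (deriv m t * ((1:ℝ)/3) * m t ^ ((1:ℝ)/3 - 1) * n t ^ (-(2:ℝ)/3)
          + m t ^ ((1:ℝ)/3) * (deriv n t * (-(2:ℝ)/3) * n t ^ (-(2:ℝ)/3 - 1))) * f t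
          + m t ^ ((1:ℝ)/3) * n t ^ (-(2:ℝ)/3) * deriv f t :=
    funext fun t => (((Rm _ t).mul (Rn _ t)).mul (Hf t)).deriv
  -- second derivative of the LHS function
  have H2 : HasDerivAt (fun t =>
      (deriv m t * ((1:ℝ)/3) * m t ^ ((1:ℝ)/3 - 1) * n t ^ (-(2:ℝ)/3)
        + m t ^ ((1:ℝ)/3) * (deriv n t * (-(2:ℝ)/3) * n t ^ (-(2:ℝ)/3 - 1))) * f t
        + m t ^ ((1:ℝ)/3) * n t ^ (-(2:ℝ)/3) * deriv f t) _ x :=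
    (((((((Hm' x).mul_const ((1:ℝ)/3)).mul (Rm _ x)).mul (Rn _ x)).add
        ((Rm _ x).mul (((Hn' x).mul_const (-(2:ℝ)/3)).mul (Rn _ x)))).mul (Hf x)).add
      (((Rm _ x).mul (Rn _ x)).mul (Hf' x)))
  -- derivative of D f
  have hDf : D f = fun t => (m t * n t) ^ (-(1:ℝ)/3) * deriv f t := funext fun t => hD f t
  have HDDf : HasDerivAt (fun t => (m t * n t) ^ (-(1:ℝ)/3) * deriv f t) _ x :=
    (Rmn _ x).mul (Hf' x)
  -- derivative of P * f
  have HPF : HasDerivAt (fun t => 1/2 * m t ^ (-(4:ℝ)/3) * n t ^ ((2:ℝ)/3)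
      * ((deriv m t * n t - m t * deriv n t) / n t ^ 2) * f t) _ x :=
    (((((Rm (-(4:ℝ)/3) x).const_mul (1/2 : ℝ)).mul (Rn ((2:ℝ)/3) x)).mul
        ((((Hm' x).mul (Hn x)).sub ((Hm x).mul (Hn' x))).div ((Hn x).pow 2)
          (pow_ne_zero 2 (hnpos x).ne'))).mul (Hf x))
  -- rewrite everything
  rw [hΘ f x, hD (D f) x, hD f x]
  simp only [hPfun]
  rw [hD _ x, hDf, HDDf.deriv, HPF.deriv, hQ x, hΔ2,
    show deriv (fun t => m t * n t) x = deriv m x * n x + m x * deriv n x from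
      ((Hm x).mul (Hn x)).deriv,
    hgd, H2.deriv]
  simp only [Pi.mul_apply, Pi.div_apply, Pi.pow_apply, Pi.sub_apply, Pi.add_apply]

  -- replace cube roots
  obtain ⟨u, hu0, hu3⟩ : ∃ u : ℝ, 0 < u ∧ u ^ (3:ℕ) = m x :=
    ⟨m x ^ ((1:ℝ)/3), Real.rpow_pos_of_pos (hmpos x) _, by
      rw [← Real.rpow_natCast (m x ^ ((1:ℝ)/3)) 3, ← Real.rpow_mul (hmpos x).le]
      norm_num⟩
  obtain ⟨v, hv0, hv3⟩ : ∃ v : ℝ, 0 < v ∧ v ^ (3:ℕ) = n x :=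
    ⟨n x ^ ((1:ℝ)/3), Real.rpow_pos_of_pos (hnpos x) _, by
      rw [← Real.rpow_natCast (n x ^ ((1:ℝ)/3)) 3, ← Real.rpow_mul (hnpos x).le]
      norm_num⟩
  have pm : ∀ e : ℤ, m x ^ ((e:ℝ)/3) = u ^ e := fun e => by
    rw [← hu3, ← Real.rpow_natCast u 3, ← Real.rpow_mul hu0.le,
      show ((3:ℕ):ℝ) * ((e:ℝ)/3) = (e:ℝ) by push_cast; ring, Real.rpow_intCast]
  have pn : ∀ e : ℤ, n x ^ ((e:ℝ)/3) = v ^ e := fun e => by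
    rw [← hv3, ← Real.rpow_natCast v 3, ← Real.rpow_mul hv0.le,
      show ((3:ℕ):ℝ) * ((e:ℝ)/3) = (e:ℝ) by push_cast; ring, Real.rpow_intCast]
  simp only [Real.mul_rpow (hmpos x).le (hnpos x).le]
  rw [show ((1:ℝ)/3) = ((1:ℤ):ℝ)/3 by norm_num]
  simp only [show ((1:ℤ):ℝ)/3 - 1 = ((-2:ℤ):ℝ)/3 by norm_num,
    show ((-2:ℤ):ℝ)/3 - 1 = ((-5:ℤ):ℝ)/3 by norm_num,
    show ((-5:ℤ):ℝ)/3 - 1 = ((-8:ℤ):ℝ)/3 by norm_num,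
    show -(2:ℝ)/3 = ((-2:ℤ):ℝ)/3 by norm_num,
    show -(4:ℝ)/3 = ((-4:ℤ):ℝ)/3 by norm_num,
    show ((-4:ℤ):ℝ)/3 - 1 = ((-7:ℤ):ℝ)/3 by norm_num,
    show (2:ℝ)/3 = ((2:ℤ):ℝ)/3 by norm_num,
    show ((2:ℤ):ℝ)/3 - 1 = ((-1:ℤ):ℝ)/3 by norm_num,
    show -(1:ℝ)/3 = ((-1:ℤ):ℝ)/3 by norm_num,
    show ((-1:ℤ):ℝ)/3 - 1 = ((-4:ℤ):ℝ)/3 by norm_num,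
    show -(5:ℝ)/3 = ((-5:ℤ):ℝ)/3 by norm_num,
    show -(8:ℝ)/3 = ((-8:ℤ):ℝ)/3 by norm_num,
    pm, pn]
  simp only [zpow_neg, zpow_ofNat, zpow_one]
  rw [← hu3, ← hv3]
  have hu' : u ≠ 0 := hu0.ne'
  have hv' : v ≠ 0 := hv0.ne'
  generalize deriv (deriv m) x = M2
  generalize deriv (deriv n) x = N2
  generalize deriv (deriv f) x = F2
  generalize deriv m x = M1
  generalize deriv n x = N1
  generalize deriv f x = F1
  generalize f x = F
  field_simp
  ring
end

section
/- Let ρ, γ: ℝ → ℝ be smooth with 4ρ - γ² everywhere positive, ω := √(4ρ - γ²), D := ω⁻¹·d/dx, and P := -γ/ω. Then for every smooth f: ℝ → ℝ, ω⁻²·( ρ·(ω⁻¹f)' + (ρ·ω⁻¹·f)' ) = ½·( Df + P·D(P·f) ). -/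
theorem stmt18 (ρ γ f : ℝ → ℝ) (hρ : ContDiff ℝ (⊤ : ℕ∞) ρ) (hγ : ContDiff ℝ (⊤ : ℕ∞) γ)
    (hf : ContDiff ℝ (⊤ : ℕ∞) f) (hpos : ∀ x, 0 < 4 * ρ x - (γ x) ^ 2)
    (ω : ℝ → ℝ) (hω : ∀ x, ω x = Real.sqrt (4 * ρ x - (γ x) ^ 2))
    (D : (ℝ → ℝ) → (ℝ → ℝ)) (hD : ∀ g x, D g x = (ω x)⁻¹ * deriv g x)
    (P : ℝ → ℝ) (hP : ∀ x, P x = -(γ x) / ω x) :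
    ∀ x, (ω x) ^ (-2 : ℤ) *
        (ρ x * deriv (fun t => (ω t)⁻¹ * f t) x
          + deriv (fun t => ρ t * (ω t)⁻¹ * f t) x)
      = (1/2) * (D f x + P x * D (fun t => P t * f t) x) := by
  have hωe : ω = fun t => Real.sqrt (4 * ρ t - (γ t) ^ 2) := funext hω
  have hPe : P = fun t => -(γ t) / ω t := funext hP
  intro x
  have hux : 0 < 4 * ρ x - (γ x) ^ 2 := hpos x
  have hω0 : 0 < ω x := by rw [hω]; exact Real.sqrt_pos.2 hux
  have hωsq : ω x ^ 2 = 4 * ρ x - (γ x) ^ 2 := by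
    rw [hω]; exact Real.sq_sqrt hux.le
  have hρ' : HasDerivAt ρ (deriv ρ x) x :=
    ((hρ.differentiable (by simp)) x).hasDerivAt
  have hγ' : HasDerivAt γ (deriv γ x) x :=
    ((hγ.differentiable (by simp)) x).hasDerivAt
  have hf' : HasDerivAt f (deriv f x) x :=
    ((hf.differentiable (by simp)) x).hasDerivAt
  have hu : HasDerivAt (fun t => 4 * ρ t - (γ t) ^ 2)
      (4 * deriv ρ x - 2 * γ x * deriv γ x) x := by
    have h := (hρ'.const_mul 4).sub (hγ'.mul hγ')
    have he : (fun t => 4 * ρ t - (γ t) ^ 2) = fun t => 4 * ρ t - γ t * γ t := by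
      funext t; ring
    rw [he]; exact h.congr_deriv (by ring)
  set dω : ℝ := (4 * deriv ρ x - 2 * γ x * deriv γ x) / (2 * ω x) with hdω
  have hωd : HasDerivAt ω dω x := by
    rw [hωe]
    have := hu.sqrt hux.ne'
    simpa [hdω, ← hω x] using this
  have hinv : HasDerivAt (fun t => (ω t)⁻¹) (-dω / ω x ^ 2) x := hωd.inv hω0.ne'
  have hg1 : HasDerivAt (fun t => (ω t)⁻¹ * f t)
      ((-dω / ω x ^ 2) * f x + (ω x)⁻¹ * deriv f x) x := hinv.mul hf'
  have hg2 : HasDerivAt (fun t => ρ t * (ω t)⁻¹ * f t)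
      ((deriv ρ x * (ω x)⁻¹ + ρ x * (-dω / ω x ^ 2)) * f x
        + ρ x * (ω x)⁻¹ * deriv f x) x := (hρ'.mul hinv).mul hf'
  have hPd : HasDerivAt P
      ((-deriv γ x * ω x - -(γ x) * dω) / ω x ^ 2) x := by
    rw [hPe]; exact hγ'.neg.div hωd hω0.ne'
  have hg3 : HasDerivAt (fun t => P t * f t)
      (((-deriv γ x * ω x - -(γ x) * dω) / ω x ^ 2) * f x + P x * deriv f x) x :=
    hPd.mul hf'
  rw [hg1.deriv, hg2.deriv, hD, hD, hg3.deriv, hP]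
  rw [show (ω x) ^ (-2 : ℤ) = ((ω x) ^ 2)⁻¹ by
    rw [zpow_neg, zpow_two, sq]]
  rw [hdω]
  have hw := hω0.ne'
  field_simp
  linear_combination (f x * (4 * deriv ρ x - 2 * γ x * deriv γ x)
    - 2 * ω x ^ 2 * deriv f x) * hωsq
end

section
/- Let ρ, γ: ℝ → ℝ be smooth with 4ρ - γ² everywhere positive and set ω := √(4ρ - γ²). Then applying the matrix operator K = [[ρ∂ₓ + ∂ₓρ, γ∂ₓ],[∂ₓγ, 2∂ₓ]] to the vector (-ω⁻¹, γ/(2ω))ᵀ gives the zero vector: ρ·(-ω⁻¹)' + (ρ·(-ω⁻¹))' + γ·(γ/(2ω))' = 0 and (γ·(-ω⁻¹))' + 2·(γ/(2ω))' = 0. -/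
theorem stmt19 (ρ γ : ℝ → ℝ) (hρ : ContDiff ℝ (⊤ : ℕ∞) ρ) (hγ : ContDiff ℝ (⊤ : ℕ∞) γ)
    (hpos : ∀ x, 0 < 4 * ρ x - (γ x) ^ 2)
    (ω : ℝ → ℝ) (hω : ∀ x, ω x = Real.sqrt (4 * ρ x - (γ x) ^ 2)) :
    ∀ x, (ρ x * deriv (fun t => -(ω t)⁻¹) x
          + deriv (fun t => ρ t * (-(ω t)⁻¹)) x
          + γ x * deriv (fun t => γ t / (2 * ω t)) x = 0)
      ∧ deriv (fun t => γ t * (-(ω t)⁻¹)) x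
          + 2 * deriv (fun t => γ t / (2 * ω t)) x = 0 := by
  intro x
  have hωfun : ω = fun t => Real.sqrt (4 * ρ t - (γ t) ^ 2) := funext hω
  have hρx : HasDerivAt ρ (deriv ρ x) x :=
    ((hρ.differentiable (by simp)) x).hasDerivAt
  have hγx : HasDerivAt γ (deriv γ x) x :=
    ((hγ.differentiable (by simp)) x).hasDerivAt
  set a := deriv ρ x with ha
  set b := deriv γ x with hb
  have hu : HasDerivAt (fun t => 4 * ρ t - (γ t) ^ 2)
      (4 * a - 2 * γ x ^ 1 * b) x :=
    (hρx.const_mul 4).sub (hγx.pow 2)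
  have hupos := hpos x
  have hωpos : 0 < ω x := by rw [hω x]; exact Real.sqrt_pos.mpr hupos
  have hωne : ω x ≠ 0 := ne_of_gt hωpos
  have hsq : ω x ^ 2 = 4 * ρ x - γ x ^ 2 := by
    rw [hω x]; exact Real.sq_sqrt hupos.le
  set d := (4 * a - 2 * γ x ^ 1 * b) / (2 * Real.sqrt (4 * ρ x - (γ x) ^ 2))
    with hd
  have hωd : HasDerivAt ω d x := by
    rw [hωfun]; exact hu.sqrt (ne_of_gt hupos)
  have h1 : HasDerivAt (fun t => -(ω t)⁻¹) (-(-d / ω x ^ 2)) x :=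
    (hωd.inv hωne).neg
  have h2 : HasDerivAt (fun t => ρ t * (-(ω t)⁻¹))
      (a * (-(ω x)⁻¹) + ρ x * (-(-d / ω x ^ 2))) x := hρx.mul h1
  have h2ω : HasDerivAt (fun t => 2 * ω t) (2 * d) x := hωd.const_mul 2
  have h3 : HasDerivAt (fun t => γ t / (2 * ω t))
      ((b * (2 * ω x) - γ x * (2 * d)) / (2 * ω x) ^ 2) x :=
    hγx.div h2ω (by positivity)
  have h4 : HasDerivAt (fun t => γ t * (-(ω t)⁻¹))
      (b * (-(ω x)⁻¹) + γ x * (-(-d / ω x ^ 2))) x := hγx.mul h1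
  rw [h1.deriv, h2.deriv, h3.deriv, h4.deriv] at *
  have hdval : d = (4 * a - 2 * γ x ^ 1 * b) / (2 * ω x) := by
    rw [hd, hω x]
  constructor
  · rw [hdval]
    have hρ' : ρ x = (ω x ^ 2 + γ x ^ 2) / 4 := by linarith
    rw [hρ']
    field_simp
    ring
  · field_simp [hdval]
    ring
end
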